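/- Let T > 0, v > 0, r > 0, f ≥ 0 and δ ≥ 0 be real numbers. Let n(τ) = τ·T·v·(1+r)/(τ + (1+r)·(T−τ)) and τ⋆(δ) = T·min{1, ((1+r)/r)·max{0, 1 − √((1+f)/(1+δ))}}. Then f·n(τ⋆(δ)) = f·v·T·min{1+r, ((1+r)/r)·max{0, √((1+δ)/(1+f)) − 1}}. -/
import Mathlib


/-- Fee revenue identity: with `n(τ) = τ·T·v·(1+r)/(τ + (1+r)·(T−τ))` and optimal trade
`τ⋆(δ) = T·min{1, ((1+r)/r)·max{0, 1 − √((1+f)/(1+δ))}}`, the fee revenue satisfies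
`f·n(τ⋆(δ)) = f·v·T·min{1+r, ((1+r)/r)·max{0, √((1+δ)/(1+f)) − 1}}`. -/
theorem fee_revenue_identity
    (T v r f δ : ℝ) (hT : 0 < T) (hv : 0 < v) (hr : 0 < r) (hf : 0 ≤ f) (hδ : 0 ≤ δ) :
    f * ((T * min 1 ((1 + r) / r * max 0 (1 - Real.sqrt ((1 + f) / (1 + δ))))) * T * v * (1 + r) /
        ((T * min 1 ((1 + r) / r * max 0 (1 - Real.sqrt ((1 + f) / (1 + δ))))) +
          (1 + r) * (T - T * min 1 ((1 + r) / r * max 0 (1 - Real.sqrt ((1 + f) / (1 + δ))))))) =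
    f * v * T * min (1 + r) ((1 + r) / r * max 0 (Real.sqrt ((1 + δ) / (1 + f)) - 1)) := by
  have h1f : (0:ℝ) < 1 + f := by linarith
  have h1δ : (0:ℝ) < 1 + δ := by linarith
  set s := Real.sqrt ((1 + f) / (1 + δ)) with hs
  have hspos : 0 < s := Real.sqrt_pos.mpr (div_pos h1f h1δ)
  have hinv : Real.sqrt ((1 + δ) / (1 + f)) = s⁻¹ := by
    rw [hs, ← Real.sqrt_inv, inv_div]
  rw [hinv]
  have hrpos : (0:ℝ) < 1 + r := by linarith
  rcases le_or_gt 1 s with h | h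
  · -- s ≥ 1 : both sides vanish
    have hm1 : max 0 (1 - s) = 0 := max_eq_left (by linarith)
    have hsinv : s⁻¹ ≤ 1 := by
      rw [inv_le_one_iff₀]; right; exact h
    have hm2 : max 0 (s⁻¹ - 1) = 0 := max_eq_left (by linarith)
    rw [hm1, hm2]
    norm_num [min_eq_right hrpos.le]
  · -- s < 1
    have hm1 : max 0 (1 - s) = 1 - s := max_eq_right (by linarith)
    have hsinv1 : 1 < s⁻¹ := (one_lt_inv₀ hspos).mpr h
    have hm2 : max 0 (s⁻¹ - 1) = s⁻¹ - 1 := max_eq_right (by linarith)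
    rw [hm1, hm2]
    rcases le_or_gt ((1 + r) * s) 1 with h2 | h2
    · -- corner: τ⋆ = T
      have hmin1 : min 1 ((1 + r) / r * (1 - s)) = 1 := by
        apply min_eq_left
        rw [div_mul_eq_mul_div, le_div_iff₀ hr]
        nlinarith
      have hss : s * s⁻¹ = 1 := mul_inv_cancel₀ hspos.ne'
      have hmin2 : min (1 + r) ((1 + r) / r * (s⁻¹ - 1)) = 1 + r := by
        apply min_eq_left
        rw [div_mul_eq_mul_div, le_div_iff₀ hr]
        nlinarith [hss, hspos, h2, mul_pos hrpos hspos]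
      rw [hmin1, hmin2]
      have hTne : T ≠ 0 := ne_of_gt hT
      field_simp
      ring
    · -- interior
      have hmin1 : min 1 ((1 + r) / r * (1 - s)) = (1 + r) / r * (1 - s) := by
        apply min_eq_right
        rw [div_mul_eq_mul_div, div_le_one hr]
        nlinarith
      have hss : s * s⁻¹ = 1 := mul_inv_cancel₀ hspos.ne'
      have hmin2 : min (1 + r) ((1 + r) / r * (s⁻¹ - 1)) = (1 + r) / r * (s⁻¹ - 1) := by
        apply min_eq_right
        rw [div_mul_eq_mul_div, div_le_iff₀ hr]
        nlinarith [hss, hspos, h2, mul_pos hrpos hspos]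
      rw [hmin1, hmin2]
      have hden : T * ((1 + r) / r * (1 - s)) +
          (1 + r) * (T - T * ((1 + r) / r * (1 - s))) = (1 + r) * T * s := by
        field_simp
        ring
      rw [hden]
      have hsne : s ≠ 0 := hspos.ne'
      have hrne : r ≠ 0 := hr.ne'
      have h1rne : (1:ℝ) + r ≠ 0 := hrpos.ne'
      field_simp
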